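/- arXiv:2303.06360 — 2 statements merged into one kernel-verified Lean document; each statement's English description precedes it below -/
import Mathlib

section
/- Let K ≥ 1, let p ∈ [0,1], and let g_1, …, g_K be fixed vectors in ℝ^d. Let ζ_1, …, ζ_K be independent Bernoulli(p) random variables (ζ_k = 1 with probability p, ζ_k = 0 with probability 1 − p), and adopt the convention that ζ_k / (∑_{m=1}^K ζ_m) = 0 whenever ∑_{m=1}^K ζ_m = 0. Then the expectation of the randomly pruned aggregate ∑_{k=1}^K (ζ_k / ∑_{m=1}^K ζ_m) · g_k equals (1 − (1 − p)^K) · (1/K) ∑_{k=1}^K g_k. In other words, the pruned aggregated gradient equals the non-pruned average gradient scaled by the factor 1 − (1 − p)^K. -/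
/-!
The layer-preserving pattern `ζ` is exchangeable, so every client has the same expected share of
the aggregate. The shares of one pattern add up to `1` unless every layer is pruned, which happens
with probability `(1 - p) ^ K`; hence each expected share is `(1 - (1 - p) ^ K) / K`, and linearity
of expectation gives the pruned aggregate.
-/

open Finset

noncomputable section

namespace FedLP

variable {ι : Type*} [Fintype ι]

def bernoulliWeight (p : ℝ) (ζ : ι → Bool) : ℝ :=
  ∏ m, if ζ m then p else 1 - p

-- By `0 / 0 = 0`, every share vanishes when all clients' layers are pruned.
def prunedShare (ζ : ι → Bool) (k : ι) : ℝ :=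
  (if ζ k then 1 else 0) / ∑ m, if ζ m then (1 : ℝ) else 0

theorem bernoulliWeight_comp_perm (p : ℝ) (ζ : ι → Bool) (σ : Equiv.Perm ι) :
    bernoulliWeight p (ζ ∘ σ) = bernoulliWeight p ζ :=
  Equiv.prod_comp σ fun m => if ζ m then p else 1 - p

theorem bernoulliWeight_false (p : ℝ) :
    bernoulliWeight p (fun _ : ι => false) = (1 - p) ^ Fintype.card ι := by
  simp [bernoulliWeight]

theorem prunedShare_comp_perm (ζ : ι → Bool) (σ : Equiv.Perm ι) (k : ι) :
    prunedShare (ζ ∘ σ) k = prunedShare ζ (σ k) := by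
  simp only [prunedShare, Function.comp_apply,
    Equiv.sum_comp σ fun m => if ζ m then (1 : ℝ) else 0]

theorem sum_prunedShare (ζ : ι → Bool) :
    ∑ k, prunedShare ζ k = if ζ = fun _ => false then 0 else 1 := by
  simp only [prunedShare]
  rw [← sum_div]
  split_ifs with hζ
  · simp [hζ]
  · obtain ⟨m, hm⟩ : ∃ m, ζ m = true := by
      by_contra! h
      exact hζ (funext fun m => by simpa using h m)
    have hcount : (0 : ℝ) < ∑ m, if ζ m then (1 : ℝ) else 0 :=
      sum_pos' (fun _ _ => by positivity) ⟨m, mem_univ m, by simp [hm]⟩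
    exact div_self hcount.ne'

variable [DecidableEq ι]

theorem sum_bernoulliWeight (p : ℝ) : ∑ ζ : ι → Bool, bernoulliWeight p ζ = 1 := by
  simpa [bernoulliWeight] using
    (Fintype.prod_sum fun (_ : ι) (b : Bool) => if b then p else 1 - p).symm

theorem expected_prunedShare_eq (p : ℝ) (k j : ι) :
    ∑ ζ : ι → Bool, bernoulliWeight p ζ * prunedShare ζ k
      = ∑ ζ : ι → Bool, bernoulliWeight p ζ * prunedShare ζ j := by
  refine Fintype.sum_equiv ((Equiv.swap k j).arrowCongr (Equiv.refl Bool)) _ _ fun ζ => ?_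
  have hswap : (Equiv.swap k j).arrowCongr (Equiv.refl Bool) ζ = ζ ∘ Equiv.swap k j := rfl
  rw [hswap, bernoulliWeight_comp_perm, prunedShare_comp_perm, Equiv.swap_apply_right]

theorem sum_expected_prunedShare (p : ℝ) :
    ∑ k, ∑ ζ : ι → Bool, bernoulliWeight p ζ * prunedShare ζ k
      = 1 - (1 - p) ^ Fintype.card ι := by
  simp_rw [sum_comm (γ := ι), ← mul_sum, sum_prunedShare, mul_ite, mul_zero, mul_one]
  rw [sum_ite, sum_const_zero, zero_add, filter_ne', sum_erase_eq_sub (mem_univ _),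
    sum_bernoulliWeight, bernoulliWeight_false]

theorem expected_prunedShare_eq_div (p : ℝ) (k : ι) :
    ∑ ζ : ι → Bool, bernoulliWeight p ζ * prunedShare ζ k
      = (1 - (1 - p) ^ Fintype.card ι) / Fintype.card ι := by
  have hcard : (Fintype.card ι : ℝ) ≠ 0 :=
    Nat.cast_ne_zero.mpr (Fintype.card_pos_iff.mpr ⟨k⟩).ne'
  rw [eq_div_iff hcard, ← sum_expected_prunedShare p,
    sum_congr rfl fun j _ => expected_prunedShare_eq p j k, sum_const, card_univ, nsmul_eq_mul,
    mul_comm]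

end FedLP

end

open FedLP in
theorem fedlp_pruned_aggregate_expectation_general
    (K d : ℕ) (p : ℝ)
    (g : Fin K → (Fin d → ℝ)) :
    ∑ ζ : Fin K → Bool,
      (∏ m : Fin K, if ζ m then p else 1 - p) •
        (∑ k : Fin K,
          (((if ζ k then (1 : ℝ) else 0) /
              ∑ m : Fin K, if ζ m then (1 : ℝ) else 0) • g k))
      = (1 - (1 - p) ^ K) • ((K : ℝ)⁻¹ • ∑ k : Fin K, g k) := by
  change ∑ ζ : Fin K → Bool, bernoulliWeight p ζ • ∑ k, prunedShare ζ k • g k = _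
  simp_rw [smul_sum, smul_smul]
  rw [sum_comm]
  simp_rw [← sum_smul, expected_prunedShare_eq_div, Fintype.card_fin, div_eq_mul_inv]

/-- **FedLP Proposition 1 (vector form).**
Let `K ≥ 1`, `p ∈ [0,1]`, and `g 1, …, g K` be fixed vectors in `ℝ^d`.
With `ζ : Fin K → Bool` distributed as a product of independent `Bernoulli p`
variables (weight `∏ m, if ζ m then p else 1 - p`), and the convention
`0 / 0 = 0` (which is Lean's default for real division), the expectation of
the pruned aggregate `∑ k, (ζ k / ∑ m, ζ m) • g k` equals
`(1 - (1 - p)^K) • ((1/K) • ∑ k, g k)`. -/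
theorem fedlp_pruned_aggregate_expectation
    (K d : ℕ) (hK : 1 ≤ K) (p : ℝ) (hp0 : 0 ≤ p) (hp1 : p ≤ 1)
    (g : Fin K → (Fin d → ℝ)) :
    ∑ ζ : Fin K → Bool,
      (∏ m : Fin K, if ζ m then p else 1 - p) •
        (∑ k : Fin K,
          (((if ζ k then (1 : ℝ) else 0) /
              ∑ m : Fin K, if ζ m then (1 : ℝ) else 0) • g k))
      = (1 - (1 - p) ^ K) • ((K : ℝ)⁻¹ • ∑ k : Fin K, g k) :=
  fedlp_pruned_aggregate_expectation_general K d p g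
end

section
/- Let K ≥ 1 and p ∈ [0,1], and let ζ_1, …, ζ_K be independent Bernoulli(p) random variables, with the convention that ζ_k / (∑_{m=1}^K ζ_m) = 0 whenever ∑_{m=1}^K ζ_m = 0. Then for every fixed index k ∈ {1, …, K}, E[ ζ_k / ∑_{m=1}^K ζ_m ] = (1 − (1 − p)^K) / K. -/
/-!
Relabelling the clients permutes the outcomes `ζ` without changing their probabilities, so all
clients have the same expected weight. The weights of the `K` clients add up to `1` unless no
client keeps its layer, an event of probability `(1 - p) ^ K`; hence `K` times the expected weight
of one client is `1 - (1 - p) ^ K`.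
-/

open Finset

section

variable {ι R : Type*} [Fintype ι]

def bernoulliWeight [CommRing R] (p : R) (ζ : ι → Bool) : R :=
  ∏ m, if ζ m then p else 1 - p

theorem bernoulliWeight_bot [CommRing R] (p : R) :
    bernoulliWeight p (⊥ : ι → Bool) = (1 - p) ^ Fintype.card ι := by
  simp [bernoulliWeight]

theorem bernoulliWeight_comp_perm [CommRing R] (p : R) (e : Equiv.Perm ι) (ζ : ι → Bool) :
    bernoulliWeight p (ζ ∘ e) = bernoulliWeight p ζ :=
  Equiv.prod_comp e fun m => if ζ m then p else 1 - p

theorem sum_boole_ne_zero [AddCommMonoidWithOne R] [CharZero R] {ζ : ι → Bool} (hζ : ζ ≠ ⊥) :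
    (∑ m, if ζ m then 1 else 0 : R) ≠ 0 := by
  obtain ⟨m, hm⟩ : ∃ m, ζ m = true := by
    by_contra! h
    exact hζ (funext fun m => by simpa using h m)
  rw [sum_boole, Nat.cast_ne_zero, ← pos_iff_ne_zero, card_pos]
  exact ⟨m, by simpa using hm⟩

variable [DecidableEq ι]

theorem sum_bernoulliWeight [CommRing R] (p : R) :
    ∑ ζ : ι → Bool, bernoulliWeight p ζ = 1 := by
  unfold bernoulliWeight
  rw [← Fintype.prod_sum fun _ (b : Bool) => if b then p else 1 - p]
  simp

def expectedShare [Field R] (p : R) (k : ι) : R :=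
  ∑ ζ : ι → Bool, bernoulliWeight p ζ * ((if ζ k then 1 else 0) / ∑ m, if ζ m then 1 else 0)

theorem expectedShare_perm_apply [Field R] (p : R) (e : Equiv.Perm ι) (k : ι) :
    expectedShare p (e k) = expectedShare p k := by
  refine Fintype.sum_equiv (e.symm.arrowCongr (Equiv.refl Bool)) _ _ fun ζ => ?_
  change _ = bernoulliWeight p (ζ ∘ e) *
    ((if ζ (e k) then 1 else 0) / ∑ m, if ζ (e m) then 1 else 0)
  rw [bernoulliWeight_comp_perm, Equiv.sum_comp e fun m => if ζ m then (1 : R) else 0]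

theorem expectedShare_eq_expectedShare [Field R] (p : R) (k k' : ι) :
    expectedShare p k = expectedShare p k' := by
  simpa using expectedShare_perm_apply p (Equiv.swap k' k) k'

theorem sum_expectedShare [Field R] [CharZero R] (p : R) :
    ∑ k : ι, expectedShare p k = 1 - (1 - p) ^ Fintype.card ι := by
  have hshares (ζ : ι → Bool) (hζ : ζ ≠ ⊥) :
      ∑ k, bernoulliWeight p ζ * ((if ζ k then 1 else 0) / ∑ m, if ζ m then 1 else 0) =
        bernoulliWeight p ζ := by
    rw [← mul_sum, ← sum_div, div_self (sum_boole_ne_zero hζ), mul_one]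
  have htotal := sum_bernoulliWeight (ι := ι) p
  rw [Fintype.sum_eq_add_sum_compl ⊥, bernoulliWeight_bot] at htotal
  unfold expectedShare
  rw [sum_comm, Fintype.sum_eq_add_sum_compl ⊥,
    sum_congr rfl fun ζ hζ => hshares ζ (by simpa using hζ)]
  simp only [Pi.bot_apply, bot_eq_false, Bool.false_eq_true, if_false, zero_div, mul_zero,
    sum_const_zero, zero_add]
  linear_combination htotal

theorem expectedShare_eq [Field R] [CharZero R] [Nonempty ι] (p : R) (k : ι) :
    expectedShare p k = (1 - (1 - p) ^ Fintype.card ι) / Fintype.card ι := by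
  have hcard : (Fintype.card ι : R) ≠ 0 := Nat.cast_ne_zero.mpr Fintype.card_ne_zero
  rw [eq_div_iff hcard, ← sum_expectedShare p,
    sum_congr rfl fun k' _ => expectedShare_eq_expectedShare p k' k]
  simp [mul_comm]

end

theorem fedlp_expected_weight_single_general
    (K : ℕ) (p : ℝ) (k : Fin K) :
    ∑ ζ : Fin K → Bool,
      (∏ m : Fin K, if ζ m then p else 1 - p) *
        ((if ζ k then (1 : ℝ) else 0) /
          ∑ m : Fin K, if ζ m then (1 : ℝ) else 0)
      = (1 - (1 - p) ^ K) / K := by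
  have : Nonempty (Fin K) := ⟨k⟩
  have h := expectedShare_eq p k
  rw [Fintype.card_fin] at h
  exact h

/-- **FedLP per-client expected aggregation weight.**
With `ζ : Fin K → Bool` distributed as a product of independent `Bernoulli p`
variables (weight `∏ m, if ζ m then p else 1 - p`), and the convention
`0 / 0 = 0`, for every fixed client `k` one has
`E[ζ k / ∑ m, ζ m] = (1 - (1 - p)^K) / K`. -/
theorem fedlp_expected_weight_single
    (K : ℕ) (hK : 1 ≤ K) (p : ℝ) (hp0 : 0 ≤ p) (hp1 : p ≤ 1) (k : Fin K) :
    ∑ ζ : Fin K → Bool,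
      (∏ m : Fin K, if ζ m then p else 1 - p) *
        ((if ζ k then (1 : ℝ) else 0) /
          ∑ m : Fin K, if ζ m then (1 : ℝ) else 0)
      = (1 - (1 - p) ^ K) / K :=
  fedlp_expected_weight_single_general K p k
end
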